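/- arXiv:2011.09549 — 4 statements merged into one kernel-verified Lean document; each statement's English description precedes it below -/
import Mathlib

section
/- For fixed ν > 0, σ²ₐ > 0, and n_δ > 0, the Gönen Bayes factor BF10(t) = [(1 + t²/ν)/(1 + t²/(ν(1 + n_δ·σ²ₐ)))]^((ν+1)/2) · (1 + n_δ·σ²ₐ)^(−1/2) tends to the finite limit (1 + n_δ·σ²ₐ)^(ν/2) as t → ∞ (the information paradox). -/
open Real Filter

/-- Dividing numerator and denominator by `t ^ 2` turns the ratio into
`(t⁻¹ ^ 2 + a⁻¹) / (t⁻¹ ^ 2 + (a * c)⁻¹)`, which is continuous at `t⁻¹ = 0`. -/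
theorem tendsto_one_add_sq_div_div_one_add_sq_div {a c : ℝ} (ha : a ≠ 0) (hc : c ≠ 0) :
    Tendsto (fun t : ℝ => (1 + t ^ 2 / a) / (1 + t ^ 2 / (a * c))) atTop (nhds c) := by
  have hinv : Tendsto (fun t : ℝ => t⁻¹ ^ 2) atTop (nhds 0) := by
    simpa using (tendsto_inv_atTop_zero (𝕜 := ℝ)).pow 2
  have hlim : Tendsto (fun t : ℝ => (t⁻¹ ^ 2 + a⁻¹) / (t⁻¹ ^ 2 + (a * c)⁻¹)) atTop
      (nhds ((0 + a⁻¹) / (0 + (a * c)⁻¹))) :=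
    (hinv.add_const _).div (hinv.add_const _) (by simp [ha, hc])
  have hval : (0 + a⁻¹) / (0 + (a * c)⁻¹) = c := by
    rw [zero_add, zero_add]
    field_simp
  rw [hval] at hlim
  refine hlim.congr' ?_
  filter_upwards [eventually_gt_atTop 0] with t ht
  field_simp

theorem stmt_6 (ν σa nδ : ℝ) (hν : 0 < ν) (hσ : 0 < σa) (hn : 0 < nδ) :
    Tendsto (fun t : ℝ =>
        ((1 + t ^ 2 / ν) / (1 + t ^ 2 / (ν * (1 + nδ * σa)))) ^ ((ν + 1) / 2) *
          (1 + nδ * σa) ^ (-(1 : ℝ) / 2))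
      atTop (nhds ((1 + nδ * σa) ^ (ν / 2))) := by
  set c : ℝ := 1 + nδ * σa
  have hc : 0 < c := by positivity
  have hexp : c ^ ((ν + 1) / 2) * c ^ (-(1 : ℝ) / 2) = c ^ (ν / 2) := by
    rw [← rpow_add hc]
    ring_nf
  rw [← hexp]
  exact ((tendsto_one_add_sq_div_div_one_add_sq_div hν.ne' hc.ne').rpow_const
    (Or.inl hc.ne')).mul_const _
end

section
/- For fixed g > 0 and n > k + 1, Zellner's g-prior Bayes factor BF10(R²) = (1+g)^((n−k−1)/2)·(1 + g(1−R²))^(−(n−1)/2) is strictly increasing in R² on [0,1), and as R² → 1⁻ it tends to the finite limit BF10(R²) → (1+g)^((n−k−1)/2). -/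
open Real Filter

theorem stmt_9 (g : ℝ) (hg : 0 < g) (n k : ℕ) (hnk : k + 1 < n) :
    StrictMonoOn (fun R2 : ℝ =>
        (1 + g) ^ (((n : ℝ) - k - 1) / 2) * (1 + g * (1 - R2)) ^ (-((n : ℝ) - 1) / 2))
      (Set.Ico (0 : ℝ) 1) ∧
    Tendsto (fun R2 : ℝ =>
        (1 + g) ^ (((n : ℝ) - k - 1) / 2) * (1 + g * (1 - R2)) ^ (-((n : ℝ) - 1) / 2))
      (nhdsWithin 1 (Set.Iio 1)) (nhds ((1 + g) ^ (((n : ℝ) - k - 1) / 2))) := by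
  have hc : (0 : ℝ) < (1 + g) ^ (((n : ℝ) - k - 1) / 2) := by positivity
  have hn2 : (2 : ℝ) ≤ (n : ℝ) := by
    exact_mod_cast Nat.succ_le_of_lt (lt_of_le_of_lt (Nat.le_add_left 1 k) hnk)
  have hz : -((n : ℝ) - 1) / 2 < 0 := by
    apply div_neg_of_neg_of_pos _ (by norm_num)
    linarith
  constructor
  · intro x hx y hy hxy
    apply mul_lt_mul_of_pos_left _ hc
    apply Real.rpow_lt_rpow_of_neg
    · nlinarith [hx.1, hx.2, hy.1, hy.2]
    · nlinarith
    · exact hz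
  · have h1 : ContinuousAt (fun R2 : ℝ =>
        (1 + g) ^ (((n : ℝ) - k - 1) / 2) * (1 + g * (1 - R2)) ^ (-((n : ℝ) - 1) / 2)) 1 := by
      apply ContinuousAt.mul continuousAt_const
      apply ContinuousAt.rpow_const (by fun_prop)
      left; norm_num
    have := h1.continuousWithinAt (s := Set.Iio 1)
    simpa using this.tendsto
end

section
/- With the Pearson Type VI prior π(τ) = r(rτ)^β(1+rτ)^(−α−β−2)/B(α+1, β+1) where κ = r and β = (n−p)/2 − α − 2, the Garcia-Donato–Sun integral BF10 = ∫₀^∞ (1+τr)^((1−p)/2)·(1 − (τr/(1+τr))·(SSA/SST))^((1−n)/2)·π(τ) dτ evaluates in closed form to [Γ(p/2 + α + 1/2)·Γ((n−p)/2)] / [Γ((n−1)/2)·Γ(α+1)] · (SSR/SST)^(α − (n−p−2)/2), where SSR = SST − SSA. -/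
/-!
Write `q = SSR / SST`, so that `1 - (rτ / (1 + rτ)) (SSA / SST) = (1 + q rτ) / (1 + rτ)`. The
choice of `β` makes all powers of `1 + rτ` cancel, and the integrand becomes a multiple of
`(q r τ)^β (1 + q r τ)^(-(n-1)/2)`. After scaling `x = q r τ` this is the Beta integral of the
second kind `∫₀^∞ x^(a-1) (1 + x)^(-(a+b)) dx = B(a, b)` with `a = β + 1`, `b = p/2 + α + 1/2`,
which the substitution `x = y / (1 - y)` turns into Euler's Beta integral over `(0, 1)`.
-/

open Real MeasureTheory ProbabilityTheory Set

theorem integral_rpow_mul_one_sub_rpow_Ioo {a b : ℝ} (ha : 0 < a) (hb : 0 < b) :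
    ∫ y in Ioo (0 : ℝ) 1, y ^ (a - 1) * (1 - y) ^ (b - 1) = beta a b := by
  have hre : (Complex.betaIntegral a b).re =
      ∫ y in Ioo (0 : ℝ) 1, y ^ (a - 1) * (1 - y) ^ (b - 1) := by
    rw [Complex.betaIntegral, intervalIntegral.integral_of_le zero_le_one,
      ← RCLike.re_to_complex, ← integral_re, integral_Ioc_eq_integral_Ioo]
    · refine setIntegral_congr_fun measurableSet_Ioo fun y hy => ?_
      have hcast : ∀ {x : ℝ}, 0 ≤ x → ∀ s : ℝ,
          (x : ℂ) ^ ((s : ℂ) - 1) = ((x ^ (s - 1) : ℝ) : ℂ) :=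
        fun hx s => by rw [Complex.ofReal_cpow hx]; push_cast; rfl
      rw [RCLike.re_to_complex, hcast hy.1.le,
        show (1 : ℂ) - y = ((1 - y : ℝ) : ℂ) by push_cast; rfl, hcast (sub_pos.2 hy.2).le]
      norm_cast
    · exact (Complex.betaIntegral_convergent (by simpa) (by simpa)).1
  rw [beta_eq_betaIntegralReal a b ha hb, hre]

theorem integral_rpow_mul_one_add_rpow_neg_Ioi {a b : ℝ} (ha : 0 < a) (hb : 0 < b) :
    ∫ x in Ioi (0 : ℝ), x ^ (a - 1) * (1 + x) ^ (-(a + b)) = beta a b := by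
  set f : ℝ → ℝ := fun y => y / (1 - y)
  have himage : f '' Ioo 0 1 = Ioi 0 := by
    ext x
    refine ⟨?_, fun hx => ?_⟩
    · rintro ⟨y, ⟨hy0, hy1⟩, rfl⟩
      exact div_pos hy0 (sub_pos.2 hy1)
    · have hx : 0 < x := hx
      refine ⟨x / (1 + x), ⟨by positivity, ?_⟩, ?_⟩
      · rw [div_lt_one (by positivity)]; linarith
      · simp only [f]
        field_simp
        ring
  have hderiv : ∀ y ∈ Ioo (0 : ℝ) 1, HasDerivWithinAt f (1 / (1 - y) ^ 2) (Ioo 0 1) y := by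
    intro y hy
    have h := (hasDerivAt_id' y).div ((hasDerivAt_id' y).const_sub 1) (sub_pos.2 hy.2).ne'
    rw [show (1 * (1 - y) - y * -1) / (1 - y) ^ 2 = 1 / (1 - y) ^ 2 by ring] at h
    exact h.hasDerivWithinAt
  have hinj : InjOn f (Ioo 0 1) := by
    intro y hy z hz hyz
    have h1 := (sub_pos.2 hy.2).ne'
    have h2 := (sub_pos.2 hz.2).ne'
    simp only [f] at hyz
    field_simp at hyz
    linarith
  rw [← himage, integral_image_eq_integral_abs_deriv_smul measurableSet_Ioo hderiv hinj,
    ← integral_rpow_mul_one_sub_rpow_Ioo ha hb]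
  refine setIntegral_congr_fun measurableSet_Ioo fun y hy => ?_
  have hy0 : 0 < y := hy.1
  have h1y : 0 < 1 - y := sub_pos.2 hy.2
  have hfy : 1 + f y = (1 - y)⁻¹ := by simp only [f]; field_simp; ring
  have hsplit : (1 - y) ^ (a + b) = (1 - y) ^ (a - 1) * (1 - y) ^ (b - 1) * (1 - y) ^ 2 := by
    rw [← Real.rpow_natCast, ← Real.rpow_add h1y, ← Real.rpow_add h1y]
    congr 1
    push_cast
    ring
  rw [smul_eq_mul, hfy, abs_of_pos (by positivity), Real.div_rpow hy0.le h1y.le,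
    Real.inv_rpow h1y.le, ← Real.rpow_neg h1y.le, neg_neg, hsplit]
  have : (1 - y) ^ (a - 1) ≠ 0 := (Real.rpow_pos_of_pos h1y _).ne'
  field_simp

theorem integral_comp_mul_rpow_mul_one_add_rpow_neg_Ioi {a b c : ℝ} (ha : 0 < a) (hb : 0 < b)
    (hc : 0 < c) :
    ∫ τ in Ioi (0 : ℝ), (c * τ) ^ (a - 1) * (1 + c * τ) ^ (-(a + b)) = c⁻¹ * beta a b := by
  rw [integral_comp_mul_left_Ioi (fun x => x ^ (a - 1) * (1 + x) ^ (-(a + b))) 0 hc, mul_zero,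
    integral_rpow_mul_one_add_rpow_neg_Ioi ha hb, smul_eq_mul]

theorem beta_div_beta {a b c : ℝ} (ha : 0 < a) (hb : 0 < b) (hc : 0 < c) :
    beta a b / beta c a = Gamma b * Gamma (c + a) / (Gamma (a + b) * Gamma c) := by
  have := Gamma_pos_of_pos ha
  have := Gamma_pos_of_pos (add_pos ha hb)
  have := Gamma_pos_of_pos (add_pos hc ha)
  have := Gamma_pos_of_pos hc
  simp only [beta]
  field_simp

theorem one_add_rpow_mul_one_sub_div_rpow {x q s t e : ℝ} (hx : 0 ≤ x) (hq : 0 ≤ q)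
    (hste : s + e = t) :
    (1 + x) ^ s * (1 - x / (1 + x) * (1 - q)) ^ t * (1 + x) ^ e = (1 + q * x) ^ t := by
  have h1x : 0 < 1 + x := by linarith
  have hfrac : 1 - x / (1 + x) * (1 - q) = (1 + q * x) / (1 + x) := by
    field_simp
    ring
  rw [hfrac, Real.div_rpow (by positivity) h1x.le, ← hste, Real.rpow_add h1x]
  have : (1 + x) ^ s * (1 + x) ^ e ≠ 0 := by positivity
  field_simp

theorem stmt_14_general (n p : ℕ) (hp : 2 ≤ p) (α : ℝ) (hα1 : -1/2 ≤ α)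
    (hnp : 2 * α + 2 < (n : ℝ) - p)
    (r : ℝ) (hrpos : 0 < r)
    (SSA SST : ℝ) (hA : 0 < SSA) (hAT : SSA < SST)
    (SSR : ℝ) (hSSR : SSR = SST - SSA)
    (β : ℝ) (hβ : β = ((n : ℝ) - p) / 2 - α - 2) :
    ∫ τ in Set.Ioi (0 : ℝ),
        (1 + τ * r) ^ ((1 - (p : ℝ)) / 2) *
          (1 - (τ * r / (1 + τ * r)) * (SSA / SST)) ^ ((1 - (n : ℝ)) / 2) *
          (r * (r * τ) ^ β * (1 + r * τ) ^ (-α - β - 2) /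
            (Gamma (α + 1) * Gamma (β + 1) / Gamma (α + 1 + (β + 1)))) =
      Gamma ((p : ℝ) / 2 + α + 1 / 2) * Gamma (((n : ℝ) - p) / 2) /
          (Gamma (((n : ℝ) - 1) / 2) * Gamma (α + 1)) *
        (SSR / SST) ^ (α - ((n : ℝ) - p - 2) / 2) := by
  set a := β + 1 with ha_def
  set b := (p : ℝ) / 2 + α + 1 / 2 with hb_def
  set q := SSR / SST with hq_def
  have hp2 : (2 : ℝ) ≤ p := by exact_mod_cast hp
  have ha : 0 < a := by linarith
  have hb : 0 < b := by linarith
  have hq : 0 < q := div_pos (by linarith) (by linarith)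
  have hSSA : SSA / SST = 1 - q := by
    rw [hq_def, hSSR, sub_div, div_self (by linarith)]; ring
  have hab : -(a + b) = (1 - (n : ℝ)) / 2 := by linarith
  have hintegrand : ∀ τ ∈ Ioi (0 : ℝ),
      (1 + τ * r) ^ ((1 - (p : ℝ)) / 2) *
          (1 - (τ * r / (1 + τ * r)) * (SSA / SST)) ^ ((1 - (n : ℝ)) / 2) *
          (r * (r * τ) ^ β * (1 + r * τ) ^ (-α - β - 2) / beta (α + 1) a) =
        r * q ^ (-β) / beta (α + 1) a *
          ((q * r * τ) ^ (a - 1) * (1 + q * r * τ) ^ (-(a + b))) := by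
    intro τ hτ
    have hx : 0 < r * τ := mul_pos hrpos hτ
    have hqβ : q ^ β ≠ 0 := (Real.rpow_pos_of_pos hq _).ne'
    rw [mul_comm τ r, hSSA, show a - 1 = β by ring, mul_assoc q, Real.mul_rpow hq.le hx.le, hab,
      ← one_add_rpow_mul_one_sub_div_rpow hx.le hq.le (s := (1 - p) / 2) (e := -α - β - 2)
        (by linarith),
      Real.rpow_neg hq.le]
    field_simp
  have hα : 0 < α + 1 := by linarith
  change ∫ τ in Ioi (0 : ℝ), _ * (_ / beta (α + 1) a) = _
  rw [setIntegral_congr_fun measurableSet_Ioi hintegrand, integral_const_mul,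
    integral_comp_mul_rpow_mul_one_add_rpow_neg_Ioi ha hb (mul_pos hq hrpos),
    show α - ((n : ℝ) - p - 2) / 2 = -β - 1 by linarith, Real.rpow_sub_one hq.ne',
    show ((n : ℝ) - p) / 2 = α + 1 + a by linarith, show ((n : ℝ) - 1) / 2 = a + b by linarith,
    ← beta_div_beta ha hb hα]
  have := beta_pos hα ha
  field_simp

theorem stmt_14 (n p : ℕ) (hp : 2 ≤ p) (α : ℝ) (hα1 : -1/2 ≤ α) (hα2 : α ≤ 0)
    (hnp : 2 * α + 2 < (n : ℝ) - p)
    (r : ℝ) (hr : r = (n : ℝ) / p) (hrpos : 0 < r)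
    (SSA SST : ℝ) (hA : 0 < SSA) (hAT : SSA < SST)
    (SSR : ℝ) (hSSR : SSR = SST - SSA)
    (β : ℝ) (hβ : β = ((n : ℝ) - p) / 2 - α - 2) :
    ∫ τ in Set.Ioi (0 : ℝ),
        (1 + τ * r) ^ ((1 - (p : ℝ)) / 2) *
          (1 - (τ * r / (1 + τ * r)) * (SSA / SST)) ^ ((1 - (n : ℝ)) / 2) *
          (r * (r * τ) ^ β * (1 + r * τ) ^ (-α - β - 2) /
            (Gamma (α + 1) * Gamma (β + 1) / Gamma (α + 1 + (β + 1)))) =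
      Gamma ((p : ℝ) / 2 + α + 1 / 2) * Gamma (((n : ℝ) - p) / 2) /
          (Gamma (((n : ℝ) - 1) / 2) * Gamma (α + 1)) *
        (SSR / SST) ^ (α - ((n : ℝ) - p - 2) / 2) :=
  stmt_14_general n p hp α hα1 hnp r hrpos SSA SST hA hAT SSR hSSR β hβ
end

section
/- For fixed data with F > 0, x > 0, and y > 2α + 2, the Pearson Bayes factor PBF10(F) = [Γ(x/2 + α + 1)·Γ(y/2)] / [Γ((x+y)/2)·Γ(α+1)] · (y/(y + xF))^(α − y/2 + 1) is strictly increasing in F and tends to ∞ as F → ∞ (i.e., it does not suffer the information paradox). -/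
/-! The Gamma prefactor is positive, and `y / (y + x F)` decreases from `1` to `0⁺` as `F` grows,
so its power with the negative exponent `α - y / 2 + 1` increases to `∞`. -/

open Real Filter Set Topology

section

variable {a b s : ℝ}

lemma strictAntiOn_div_add_mul (ha : 0 < a) (hb : 0 < b) :
    StrictAntiOn (fun F : ℝ => a / (a + b * F)) (Ioi 0) := fun F hF G _ hFG =>
  div_lt_div_of_pos_left ha (by nlinarith [mem_Ioi.mp hF]) (by nlinarith)

lemma mapsTo_div_add_mul (ha : 0 < a) (hb : 0 < b) :
    MapsTo (fun F : ℝ => a / (a + b * F)) (Ioi 0) (Ioi 0) := fun F hF => by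
  have hF : 0 < F := hF
  simp only [mem_Ioi]
  positivity

lemma strictMonoOn_div_add_mul_rpow (ha : 0 < a) (hb : 0 < b) (hs : s < 0) :
    StrictMonoOn (fun F : ℝ => (a / (a + b * F)) ^ s) (Ioi 0) :=
  (strictAntiOn_rpow_Ioi_of_exponent_neg hs).comp (strictAntiOn_div_add_mul ha hb)
    (mapsTo_div_add_mul ha hb)

lemma tendsto_div_add_mul_nhdsGT_zero (ha : 0 < a) (hb : 0 < b) :
    Tendsto (fun F : ℝ => a / (a + b * F)) atTop (𝓝[>] 0) := by
  refine tendsto_nhdsWithin_iff.mpr ⟨?_, ?_⟩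
  · exact tendsto_const_nhds.div_atTop
      (tendsto_atTop_add_const_left _ a (tendsto_id.const_mul_atTop hb))
  · filter_upwards [eventually_gt_atTop 0] with F hF using mapsTo_div_add_mul ha hb hF

lemma tendsto_div_add_mul_rpow_atTop (ha : 0 < a) (hb : 0 < b) (hs : s < 0) :
    Tendsto (fun F : ℝ => (a / (a + b * F)) ^ s) atTop atTop :=
  (tendsto_rpow_neg_nhdsGT_zero hs).comp (tendsto_div_add_mul_nhdsGT_zero ha hb)

end

theorem stmt_16_general (x y α : ℝ) (hx : 0 < x) (hy : 0 < y)
    (hα1 : -1/2 ≤ α) (hyα : 2 * α + 2 < y) :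
    StrictMonoOn (fun F : ℝ =>
        Gamma (x / 2 + α + 1) * Gamma (y / 2) /
            (Gamma ((x + y) / 2) * Gamma (α + 1)) *
          (y / (y + x * F)) ^ (α - y / 2 + 1))
      (Set.Ioi (0 : ℝ)) ∧
    Tendsto (fun F : ℝ =>
        Gamma (x / 2 + α + 1) * Gamma (y / 2) /
            (Gamma ((x + y) / 2) * Gamma (α + 1)) *
          (y / (y + x * F)) ^ (α - y / 2 + 1))
      atTop atTop := by
  have hC : 0 < Gamma (x / 2 + α + 1) * Gamma (y / 2) /
      (Gamma ((x + y) / 2) * Gamma (α + 1)) := by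
    have := Gamma_pos_of_pos (show 0 < x / 2 + α + 1 by linarith)
    have := Gamma_pos_of_pos (show 0 < y / 2 by linarith)
    have := Gamma_pos_of_pos (show 0 < (x + y) / 2 by linarith)
    have := Gamma_pos_of_pos (show 0 < α + 1 by linarith)
    positivity
  have hs : α - y / 2 + 1 < 0 := by linarith
  exact ⟨fun F hF G hG hFG =>
      mul_lt_mul_of_pos_left (strictMonoOn_div_add_mul_rpow hy hx hs hF hG hFG) hC,
    (tendsto_div_add_mul_rpow_atTop hy hx hs).const_mul_atTop hC⟩

theorem stmt_16 (x y α : ℝ) (hx : 0 < x) (hy : 0 < y)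
    (hα1 : -1/2 ≤ α) (hα2 : α ≤ 0) (hyα : 2 * α + 2 < y) :
    StrictMonoOn (fun F : ℝ =>
        Gamma (x / 2 + α + 1) * Gamma (y / 2) /
            (Gamma ((x + y) / 2) * Gamma (α + 1)) *
          (y / (y + x * F)) ^ (α - y / 2 + 1))
      (Set.Ioi (0 : ℝ)) ∧
    Tendsto (fun F : ℝ =>
        Gamma (x / 2 + α + 1) * Gamma (y / 2) /
            (Gamma ((x + y) / 2) * Gamma (α + 1)) *
          (y / (y + x * F)) ^ (α - y / 2 + 1))
      atTop atTop :=
  stmt_16_general x y α hx hy hα1 hyα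
end
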